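/- Let a broadcast channel be c-symmetric with input alphabet Z_m (i.e., for each j there are output permutations π_j, σ_j with P(Y₁=π_j(y)|X=i+j mod m) = P(Y₁=y|X=i) and similarly for Y₂). Suppose for every input distribution p, I(X;Y₁)_p - I(X;Y₂)_p ≤ I(X;Y₁)_u - I(X;Y₂)_u where u is the uniform distribution. Then for every pair (V,X) with V → X → (Y₁,Y₂) Markov and X uniformly distributed, I(V;Y₁) ≥ I(V;Y₂). -/

import Mathlib

open Real

/-- Mutual information (in bits) of a joint pmf `q` on a product of finite alphabets,
with the conventions `log 0 = 0`, `x / 0 = 0`. -/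
noncomputable def mutualInfo {A B : Type*} [Fintype A] [Fintype B] (q : A → B → ℝ) : ℝ :=
  ∑ a, ∑ b, q a b * Real.logb 2 (q a b / ((∑ b', q a b') * (∑ a', q a' b)))

/-- Conditional mutual information `I(A;B|U)` (in bits) of a joint pmf `r` on `U × A × B`. -/
noncomputable def condMutualInfo {U A B : Type*} [Fintype U] [Fintype A] [Fintype B]
    (r : U → A → B → ℝ) : ℝ :=
  ∑ u, ∑ a, ∑ b, r u a b *
    Real.logb 2 ((r u a b * (∑ a', ∑ b', r u a' b')) / ((∑ b', r u a b') * (∑ a', r u a' b)))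

/-! The proof is the chain rule for the Markov chain `V → X → Y`:
`I(V;Y) = I(X;Y)_{p_X} - ∑_v p(v) I(X;Y)_{p(·|v)}`. With `p_X = u`, subtracting this for `Y₁`
and `Y₂` gives `I(V;Y₁) - I(V;Y₂) = Δ(u) - ∑_v p(v) Δ(p(·|v))`, where
`Δ(p) = I(X;Y₁)_p - I(X;Y₂)_p`, and this is nonnegative because `Δ` is maximised at `u`. -/

open Finset

lemma logb_div_mul_eq_sub {a u P w r s : ℝ} (ha : a ≠ 0) (hu : u ≠ 0) (hP : P ≠ 0) (hw : w ≠ 0)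
    (hr : r ≠ 0) (hs : s ≠ 0) :
    logb 2 (r / (P * s)) = logb 2 (u * w / (u * s)) - logb 2 (a * w * P / (a * r)) := by
  rw [← logb_div (by positivity) (by positivity)]
  congr 1
  field_simp

section ChainRule

variable {V X Y : Type*} [Fintype V] [Fintype X] [Fintype Y]

/- Each side of the chain rule is written as a sum over `(v, x, y)` of `p(v, x, y) · logb 2 (…)`,
so that the identity reduces termwise to `logb_div_mul_eq_sub`. -/

lemma mutualInfo_compose_eq_sum (q : V → X → ℝ) (W : X → Y → ℝ) (hWs : ∀ x, ∑ y, W x y = 1) :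
    mutualInfo (fun v y => ∑ x, q v x * W x y)
      = ∑ v, ∑ x, ∑ y, q v x * W x y *
          logb 2 ((∑ x', q v x' * W x' y) /
            ((∑ x', q v x') * (∑ x', (∑ v', q v' x') * W x' y))) := by
  have hrow : ∀ v, ∑ y, ∑ x, q v x * W x y = ∑ x, q v x := fun v => by
    rw [sum_comm]; simp only [← mul_sum, hWs, mul_one]
  have hcol : ∀ y, ∑ v, ∑ x, q v x * W x y = ∑ x, (∑ v, q v x) * W x y := fun y => by
    rw [sum_comm]; simp only [sum_mul]
  unfold mutualInfo
  refine sum_congr rfl fun v _ => ?_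
  conv_rhs => rw [sum_comm]
  refine sum_congr rfl fun y _ => ?_
  rw [hrow, hcol, sum_mul]

lemma mutualInfo_marginal_eq_sum (q : V → X → ℝ) (W : X → Y → ℝ) (hWs : ∀ x, ∑ y, W x y = 1) :
    mutualInfo (fun x y => (∑ v, q v x) * W x y)
      = ∑ v, ∑ x, ∑ y, q v x * W x y *
          logb 2 (((∑ v', q v' x) * W x y) /
            ((∑ v', q v' x) * (∑ x', (∑ v', q v' x') * W x' y))) := by
  unfold mutualInfo
  conv_rhs => rw [sum_comm]
  refine sum_congr rfl fun x _ => ?_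
  conv_rhs => rw [sum_comm]
  refine sum_congr rfl fun y _ => ?_
  rw [← mul_sum, hWs, mul_one, ← sum_mul, ← sum_mul]

lemma sum_mul_mutualInfo_normalize_eq_sum (p : X → ℝ) (W : X → Y → ℝ)
    (hp : ∀ x, 0 ≤ p x) (hWs : ∀ x, ∑ y, W x y = 1) :
    (∑ x, p x) * mutualInfo (fun x y => (p x / ∑ x', p x') * W x y)
      = ∑ x, ∑ y, p x * W x y *
          logb 2 ((p x * W x y * (∑ x', p x')) / (p x * (∑ x', p x' * W x' y))) := by
  by_cases hP : ∑ x, p x = 0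
  · have hzero : ∀ x, p x = 0 := fun x =>
      (sum_eq_zero_iff_of_nonneg fun i _ => hp i).mp hP x (mem_univ x)
    simp [hzero]
  have hrow : ∀ x, ∑ y, p x / (∑ x', p x') * W x y = p x / ∑ x', p x' := fun x => by
    rw [← mul_sum, hWs, mul_one]
  have hcol : ∀ y, ∑ x, p x / (∑ x', p x') * W x y = (∑ x, p x * W x y) / ∑ x', p x' := fun y => by
    rw [sum_div]
    exact sum_congr rfl fun x _ => div_mul_eq_mul_div _ _ _
  unfold mutualInfo
  simp only [hrow, hcol]
  rw [mul_sum]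
  refine sum_congr rfl fun x _ => ?_
  rw [mul_sum]
  refine sum_congr rfl fun y _ => ?_
  rw [← mul_assoc]
  have hcoef : (∑ x', p x') * (p x / (∑ x', p x') * W x y) = p x * W x y := by field_simp
  rw [hcoef]
  by_cases hpx : p x = 0
  · simp [hpx]
  congr 2
  field_simp

lemma mutualInfo_compose_eq_sub (q : V → X → ℝ) (W : X → Y → ℝ)
    (hq : ∀ v x, 0 ≤ q v x) (hW : ∀ x y, 0 ≤ W x y) (hWs : ∀ x, ∑ y, W x y = 1) :
    mutualInfo (fun v y => ∑ x, q v x * W x y)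
      = mutualInfo (fun x y => (∑ v, q v x) * W x y)
        - ∑ v, (∑ x, q v x) * mutualInfo (fun x y => (q v x / ∑ x', q v x') * W x y) := by
  simp only [mutualInfo_compose_eq_sum q W hWs, mutualInfo_marginal_eq_sum q W hWs,
    fun v => sum_mul_mutualInfo_normalize_eq_sum (q v) W (hq v) hWs, ← sum_sub_distrib, ← mul_sub]
  refine sum_congr rfl fun v _ => sum_congr rfl fun x _ => sum_congr rfl fun y _ => ?_
  rcases (mul_nonneg (hq v x) (hW x y)).eq_or_lt with hzero | hpos
  · rw [← hzero, zero_mul, zero_mul]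
  have hqvx : 0 < q v x := pos_of_mul_pos_left hpos (hW x y)
  have hWxy : 0 < W x y := pos_of_mul_pos_right hpos (hq v x)
  have hu : 0 < ∑ v', q v' x := sum_pos' (fun i _ => hq i x) ⟨v, mem_univ v, hqvx⟩
  have hP : 0 < ∑ x', q v x' := sum_pos' (fun i _ => hq v i) ⟨x, mem_univ x, hqvx⟩
  have hr : 0 < ∑ x', q v x' * W x' y :=
    sum_pos' (fun i _ => mul_nonneg (hq v i) (hW i y)) ⟨x, mem_univ x, hpos⟩
  have hs : 0 < ∑ x', (∑ v', q v' x') * W x' y :=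
    sum_pos' (fun i _ => mul_nonneg (sum_nonneg fun j _ => hq j i) (hW i y))
      ⟨x, mem_univ x, mul_pos hu hWxy⟩
  congr 1
  exact logb_div_mul_eq_sub hqvx.ne' hu.ne' hP.ne' hWxy.ne' hr.ne' hs.ne'

end ChainRule

lemma sum_mul_mutualInfo_sub_le {V X Y₁ Y₂ : Type*} [Fintype V] [Fintype X] [Fintype Y₁]
    [Fintype Y₂] (W₁ : X → Y₁ → ℝ) (W₂ : X → Y₂ → ℝ) (C : ℝ)
    (hle : ∀ p : X → ℝ, (∀ x, 0 ≤ p x) → ∑ x, p x = 1 →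
      mutualInfo (fun x y => p x * W₁ x y) - mutualInfo (fun x y => p x * W₂ x y) ≤ C)
    (q : V → X → ℝ) (hq : ∀ v x, 0 ≤ q v x) (hmass : ∑ v, ∑ x, q v x = 1) :
    ∑ v, (∑ x, q v x) * mutualInfo (fun x y => (q v x / ∑ x', q v x') * W₁ x y)
      - ∑ v, (∑ x, q v x) * mutualInfo (fun x y => (q v x / ∑ x', q v x') * W₂ x y) ≤ C :=
  calc _ = ∑ v, (∑ x, q v x) * (mutualInfo (fun x y => (q v x / ∑ x', q v x') * W₁ x y)
          - mutualInfo (fun x y => (q v x / ∑ x', q v x') * W₂ x y)) := by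
        simp only [mul_sub, sum_sub_distrib]
    _ ≤ ∑ v, (∑ x, q v x) * C := by
        refine sum_le_sum fun v _ => ?_
        rcases (sum_nonneg fun x _ => hq v x).eq_or_lt with hzero | hpos
        · rw [← hzero, zero_mul, zero_mul]
        exact mul_le_mul_of_nonneg_left (hle _ (fun x => div_nonneg (hq v x) hpos.le)
          (by rw [← sum_div, div_self hpos.ne'])) hpos.le
    _ = C := by rw [← sum_mul, hmass, one_mul]

theorem stmt17_general {m : ℕ} [NeZero m] {Y₁ Y₂ : Type*} [Fintype Y₁] [Fintype Y₂]
    (W₁ : ZMod m → Y₁ → ℝ) (W₂ : ZMod m → Y₂ → ℝ)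
    (hW₁ : ∀ x y, 0 ≤ W₁ x y) (hW₁s : ∀ x, ∑ y, W₁ x y = 1)
    (hW₂ : ∀ x y, 0 ≤ W₂ x y) (hW₂s : ∀ x, ∑ y, W₂ x y = 1)
    (hdom : ∀ p : ZMod m → ℝ, (∀ x, 0 ≤ p x) → (∑ x, p x) = 1 →
        mutualInfo (fun x y₁ => p x * W₁ x y₁) - mutualInfo (fun x y₂ => p x * W₂ x y₂)
          ≤ mutualInfo (fun x y₁ => (1 / (m : ℝ)) * W₁ x y₁)
            - mutualInfo (fun x y₂ => (1 / (m : ℝ)) * W₂ x y₂)) :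
    ∀ (k : ℕ) (q : Fin k → ZMod m → ℝ), (∀ v x, 0 ≤ q v x) →
      (∀ x, ∑ v, q v x = 1 / (m : ℝ)) →
      mutualInfo (fun v y₂ => ∑ x, q v x * W₂ x y₂)
        ≤ mutualInfo (fun v y₁ => ∑ x, q v x * W₁ x y₁) := by
  intro k q hq hq_unif
  have hmass : ∑ v, ∑ x, q v x = 1 := by
    rw [sum_comm]
    simp [hq_unif, NeZero.ne m]
  have h₁ := mutualInfo_compose_eq_sub q W₁ hq hW₁ hW₁s
  have h₂ := mutualInfo_compose_eq_sub q W₂ hq hW₂ hW₂s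
  simp only [hq_unif] at h₁ h₂
  linarith [sum_mul_mutualInfo_sub_le W₁ W₂ _ hdom q hq hmass]

/-- For a c-symmetric broadcast channel on ℤ/m in which Y₁ is a dominantly c-symmetric
receiver, every Markov chain V → X → (Y₁,Y₂) with X uniform satisfies I(V;Y₁) ≥ I(V;Y₂). -/
theorem stmt17 {m : ℕ} [NeZero m] {Y₁ Y₂ : Type*} [Fintype Y₁] [Fintype Y₂]
    (W₁ : ZMod m → Y₁ → ℝ) (W₂ : ZMod m → Y₂ → ℝ)
    (hW₁ : ∀ x y, 0 ≤ W₁ x y) (hW₁s : ∀ x, ∑ y, W₁ x y = 1)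
    (hW₂ : ∀ x y, 0 ≤ W₂ x y) (hW₂s : ∀ x, ∑ y, W₂ x y = 1)
    (perm₁ : ZMod m → Equiv.Perm Y₁)  (perm₂ : ZMod m → Equiv.Perm Y₂)
    (hπ : ∀ j i y, W₁ (i + j) (perm₁ j y) = W₁ i y)
    (hσ : ∀ j i y, W₂ (i + j) (perm₂ j y) = W₂ i y)
    (hdom : ∀ p : ZMod m → ℝ, (∀ x, 0 ≤ p x) → (∑ x, p x) = 1 →
        mutualInfo (fun x y₁ => p x * W₁ x y₁) - mutualInfo (fun x y₂ => p x * W₂ x y₂)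
          ≤ mutualInfo (fun x y₁ => (1 / (m : ℝ)) * W₁ x y₁)
            - mutualInfo (fun x y₂ => (1 / (m : ℝ)) * W₂ x y₂)) :
    ∀ (k : ℕ) (q : Fin k → ZMod m → ℝ), (∀ v x, 0 ≤ q v x) →
      (∀ x, ∑ v, q v x = 1 / (m : ℝ)) →
      mutualInfo (fun v y₂ => ∑ x, q v x * W₂ x y₂)
        ≤ mutualInfo (fun v y₁ => ∑ x, q v x * W₁ x y₁) :=
  stmt17_general W₁ W₂ hW₁ hW₁s hW₂ hW₂s hdom
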